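/- arXiv:1911.12847 — 2 statements merged into one kernel-verified Lean document; each statement's English description precedes it below -/
import Mathlib

section
/- Let H be a weak bialgebra. Then H_s = ε_s(H) is a subalgebra of H, and for all y ∈ H_s and z ∈ H_t one has yz = zy. -/
open TensorProduct LinearMap

namespace WeakBialgebraStmt

variable (k : Type*) [Field k] (H : Type*) [Ring H] [Algebra k H] [Coalgebra k H]

/-- `ε ⊗ ε` followed by multiplication of scalars, as a linear map `H ⊗ H → k`. -/
noncomputable def counit2 : H ⊗[k] H →ₗ[k] k :=
  (LinearMap.mul' k k) ∘ₗ TensorProduct.map (Coalgebra.counit) (Coalgebra.counit)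

/-- The weak bialgebra axioms for an algebra-and-coalgebra `H`:
comultiplication is multiplicative, the counit is weakly multiplicative
(`ε(abc) = ε(ab₁)ε(b₂c) = ε(ab₂)ε(b₁c)`), and the unit is weakly comultiplicative
(`Δ²(1) = (Δ(1)⊗1)(1⊗Δ(1)) = (1⊗Δ(1))(Δ(1)⊗1)`). -/
structure IsWeakBialgebra : Prop where
  comul_mul : ∀ a b : H,
    Coalgebra.comul (R := k) (a * b) = Coalgebra.comul (R := k) a * Coalgebra.comul (R := k) b
  counit_weak : ∀ a b c : H, Coalgebra.counit (R := k) (a * b * c)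
    = counit2 k H ((a ⊗ₜ[k] (1 : H)) * Coalgebra.comul (R := k) b * ((1 : H) ⊗ₜ[k] c))
  counit_weak' : ∀ a b c : H, Coalgebra.counit (R := k) (a * b * c)
    = counit2 k H (((1 : H) ⊗ₜ[k] a) * Coalgebra.comul (R := k) b * (c ⊗ₜ[k] (1 : H)))
  comul_one : rTensor H (Coalgebra.comul (R := k)) (Coalgebra.comul (R := k) (1 : H))
    = (Coalgebra.comul (R := k) (1 : H) ⊗ₜ[k] (1 : H)) *
        ((TensorProduct.assoc k H H H).symm ((1 : H) ⊗ₜ[k] Coalgebra.comul (R := k) (1 : H)))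
  comul_one' : rTensor H (Coalgebra.comul (R := k)) (Coalgebra.comul (R := k) (1 : H))
    = ((TensorProduct.assoc k H H H).symm ((1 : H) ⊗ₜ[k] Coalgebra.comul (R := k) (1 : H))) *
        (Coalgebra.comul (R := k) (1 : H) ⊗ₜ[k] (1 : H))

/-- The source counital map `ε_s(x) = 1₁ ε(x 1₂)`, obtained by applying `id ⊗ ε` to
`(1 ⊗ x) · Δ(1) = 1₁ ⊗ x 1₂`. -/
noncomputable def εs : H →ₗ[k] H :=
  (TensorProduct.rid k H).toLinearMap ∘ₗ lTensor H (Coalgebra.counit) ∘ₗ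
    mulRight k (Coalgebra.comul (R := k) (1 : H)) ∘ₗ TensorProduct.mk k H H 1

/-- The target counital map `ε_t(x) = ε(1₁ x) 1₂`, obtained by applying `ε ⊗ id` to
`Δ(1) · (x ⊗ 1) = 1₁ x ⊗ 1₂`. -/
noncomputable def εt : H →ₗ[k] H :=
  (TensorProduct.lid k H).toLinearMap ∘ₗ rTensor H (Coalgebra.counit) ∘ₗ
    mulLeft k (Coalgebra.comul (R := k) (1 : H)) ∘ₗ (TensorProduct.mk k H H).flip 1

/-- `x ⊗ w ↦ ε(a w) • x`. -/
noncomputable def Sm (a : H) : H ⊗[k] H →ₗ[k] H :=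
  (TensorProduct.rid k H).toLinearMap ∘ₗ lTensor H (Coalgebra.counit ∘ₗ mulLeft k a)

/-- `x ⊗ w ↦ ε(x b) • w`. -/
noncomputable def Tm (b : H) : H ⊗[k] H →ₗ[k] H :=
  (TensorProduct.lid k H).toLinearMap ∘ₗ rTensor H (Coalgebra.counit ∘ₗ mulRight k b)

/-- `u ⊗ w ↦ ε(a w) • u` on `(H ⊗ H) ⊗ H`. -/
noncomputable def Pm (a : H) : (H ⊗[k] H) ⊗[k] H →ₗ[k] H ⊗[k] H :=
  (TensorProduct.rid k (H ⊗[k] H)).toLinearMap ∘ₗ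
    lTensor (H ⊗[k] H) (Coalgebra.counit ∘ₗ mulLeft k a)

@[simp] lemma Sm_tmul (a x w : H) :
    Sm k H a (x ⊗ₜ[k] w) = Coalgebra.counit (R := k) (a * w) • x := by
  simp [Sm]

@[simp] lemma Tm_tmul (b x w : H) :
    Tm k H b (x ⊗ₜ[k] w) = Coalgebra.counit (R := k) (x * b) • w := by
  simp [Tm]

@[simp] lemma Pm_tmul (a : H) (u : H ⊗[k] H) (w : H) :
    Pm k H a (u ⊗ₜ[k] w) = Coalgebra.counit (R := k) (a * w) • u := by
  simp [Pm]

lemma one_tmul_mul (a : H) (t : H ⊗[k] H) :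
    ((1 : H) ⊗ₜ[k] a) * t = lTensor H (mulLeft k a) t := by
  induction t using TensorProduct.induction_on with
  | zero => simp
  | tmul x w => simp [Algebra.TensorProduct.tmul_mul_tmul]
  | add u v hu hv => simp [mul_add, hu, hv]

lemma mul_tmul_one (b : H) (t : H ⊗[k] H) :
    t * (b ⊗ₜ[k] (1 : H)) = rTensor H (mulRight k b) t := by
  induction t using TensorProduct.induction_on with
  | zero => simp
  | tmul x w => simp [Algebra.TensorProduct.tmul_mul_tmul]
  | add u v hu hv => simp [add_mul, hu, hv]

lemma εs_eq (a : H) : εs k H a = Sm k H a (Coalgebra.comul (R := k) (1 : H)) := by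
  simp only [εs, Sm, comp_apply, LinearEquiv.coe_coe, mulRight_apply, mk_apply,
    one_tmul_mul, ← lTensor_comp_apply]

lemma εt_eq (b : H) : εt k H b = Tm k H b (Coalgebra.comul (R := k) (1 : H)) := by
  simp only [εt, Tm, comp_apply, LinearEquiv.coe_coe, mulLeft_apply, flip_apply, mk_apply,
    mul_tmul_one, ← rTensor_comp_apply]

lemma εs_of_comul (y : H)
    (h : Coalgebra.comul (R := k) y = ((1 : H) ⊗ₜ[k] y) * Coalgebra.comul (R := k) (1 : H)) :
    εs k H y = y := by
  have : εs k H y = (TensorProduct.rid k H) (lTensor H (Coalgebra.counit)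
      (((1 : H) ⊗ₜ[k] y) * Coalgebra.comul (R := k) (1 : H))) := by
    simp [εs]
  rw [this, ← h, Coalgebra.lTensor_counit_comul, TensorProduct.rid_tmul, one_smul]

lemma Pm_rTensor_comul (a : H) (t : H ⊗[k] H) :
    Pm k H a (rTensor H (Coalgebra.comul (R := k)) t)
      = Coalgebra.comul (R := k) (Sm k H a t) := by
  induction t using TensorProduct.induction_on with
  | zero => simp
  | tmul x w => simp
  | add u v hu hv => simp [hu, hv]

set_option synthInstance.maxHeartbeats 1000000 in
lemma Pm_mul_right (a : H) (u v : H ⊗[k] H) :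
    Pm k H a ((u ⊗ₜ[k] (1 : H)) * (TensorProduct.assoc k H H H).symm ((1 : H) ⊗ₜ[k] v))
      = u * ((1 : H) ⊗ₜ[k] Sm k H a v) := by
  induction v using TensorProduct.induction_on with
  | zero => simp only [tmul_zero, LinearEquiv.map_zero, mul_zero, map_zero, tmul_zero]
  | tmul z w =>
    induction u using TensorProduct.induction_on with
    | zero => simp
    | tmul x y =>
      simp [Algebra.TensorProduct.tmul_mul_tmul, mul_smul_comm, tmul_smul, smul_tmul']
    | add u1 u2 h1 h2 => simp only [add_tmul, add_mul, map_add, h1, h2]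
  | add v1 v2 h1 h2 =>
    simp only [tmul_add, map_add, mul_add, h1, h2]

set_option synthInstance.maxHeartbeats 1000000 in
lemma Pm_mul_left (a : H) (u v : H ⊗[k] H) :
    Pm k H a ((TensorProduct.assoc k H H H).symm ((1 : H) ⊗ₜ[k] v) * (u ⊗ₜ[k] (1 : H)))
      = ((1 : H) ⊗ₜ[k] Sm k H a v) * u := by
  induction v using TensorProduct.induction_on with
  | zero => simp only [tmul_zero, LinearEquiv.map_zero, zero_mul, map_zero, tmul_zero]
  | tmul z w =>
    induction u using TensorProduct.induction_on with
    | zero => simp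
    | tmul x y =>
      simp [Algebra.TensorProduct.tmul_mul_tmul, mul_smul_comm, smul_mul_assoc, tmul_smul,
        smul_tmul']
    | add u1 u2 h1 h2 => simp only [add_tmul, mul_add, map_add, h1, h2]
  | add v1 v2 h1 h2 =>
    simp only [tmul_add, map_add, add_mul, h1, h2]

lemma Tm_mul_one_tmul (b s : H) (u : H ⊗[k] H) :
    Tm k H b (u * ((1 : H) ⊗ₜ[k] s)) = Tm k H b u * s := by
  induction u using TensorProduct.induction_on with
  | zero => simp
  | tmul x y => simp [Algebra.TensorProduct.tmul_mul_tmul, smul_mul_assoc]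
  | add u1 u2 h1 h2 => simp [add_mul, h1, h2]

lemma Tm_one_tmul_mul (b s : H) (u : H ⊗[k] H) :
    Tm k H b (((1 : H) ⊗ₜ[k] s) * u) = s * Tm k H b u := by
  induction u using TensorProduct.induction_on with
  | zero => simp
  | tmul x y => simp [Algebra.TensorProduct.tmul_mul_tmul, mul_smul_comm]
  | add u1 u2 h1 h2 => simp [mul_add, h1, h2]

lemma comul_one_idem (hwb : IsWeakBialgebra k H) :
    Coalgebra.comul (R := k) (1 : H) * Coalgebra.comul (R := k) (1 : H)
      = Coalgebra.comul (R := k) (1 : H) := by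
  have := hwb.comul_mul (1 : H) 1
  rw [mul_one] at this
  exact this.symm

lemma comul_εs_left (hwb : IsWeakBialgebra k H) (a : H) :
    Coalgebra.comul (R := k) (εs k H a)
      = Coalgebra.comul (R := k) (1 : H) * ((1 : H) ⊗ₜ[k] εs k H a) := by
  have h := congrArg (Pm k H a) hwb.comul_one
  rwa [Pm_rTensor_comul, Pm_mul_right, ← εs_eq] at h

lemma comul_εs_right (hwb : IsWeakBialgebra k H) (a : H) :
    Coalgebra.comul (R := k) (εs k H a)
      = ((1 : H) ⊗ₜ[k] εs k H a) * Coalgebra.comul (R := k) (1 : H) := by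
  have h := congrArg (Pm k H a) hwb.comul_one'
  rwa [Pm_rTensor_comul, Pm_mul_left, ← εs_eq] at h

/-- In a weak bialgebra, `H_s = ε_s(H)` is a subalgebra of `H`, and
elements of `H_s` commute with elements of `H_t`. -/
theorem epsS_range_subalgebra (hwb : IsWeakBialgebra k H) :
    (1 : H) ∈ LinearMap.range (εs k H) ∧
    (∀ y z : H, y ∈ LinearMap.range (εs k H) → z ∈ LinearMap.range (εs k H) →
      y * z ∈ LinearMap.range (εs k H)) ∧
    (∀ y z : H, y ∈ LinearMap.range (εs k H) → z ∈ LinearMap.range (εt k H) →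
      y * z = z * y) := by
  refine ⟨⟨1, ?_⟩, ?_, ?_⟩
  · apply εs_of_comul
    rw [← Algebra.TensorProduct.one_def, one_mul]
  · rintro _ _ ⟨a, rfl⟩ ⟨b, rfl⟩
    set y := εs k H a with hy
    set z := εs k H b with hz
    have key : Coalgebra.comul (R := k) (y * z)
        = ((1 : H) ⊗ₜ[k] (y * z)) * Coalgebra.comul (R := k) (1 : H) := by
      calc Coalgebra.comul (R := k) (y * z)
          = Coalgebra.comul (R := k) y * Coalgebra.comul (R := k) z := hwb.comul_mul y z
        _ = (((1 : H) ⊗ₜ[k] y) * Coalgebra.comul (R := k) (1 : H)) *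
              (Coalgebra.comul (R := k) (1 : H) * ((1 : H) ⊗ₜ[k] z)) := by
            rw [hy, hz, comul_εs_right k H hwb, comul_εs_left k H hwb]
        _ = ((1 : H) ⊗ₜ[k] y) *
              ((Coalgebra.comul (R := k) (1 : H) * Coalgebra.comul (R := k) (1 : H)) *
                ((1 : H) ⊗ₜ[k] z)) := by
            rw [mul_assoc, mul_assoc]
        _ = ((1 : H) ⊗ₜ[k] y) *
              (Coalgebra.comul (R := k) (1 : H) * ((1 : H) ⊗ₜ[k] z)) := by
            rw [comul_one_idem k H hwb]
        _ = ((1 : H) ⊗ₜ[k] y) * (((1 : H) ⊗ₜ[k] z) * Coalgebra.comul (R := k) (1 : H)) := by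
            rw [hz, ← comul_εs_left k H hwb, comul_εs_right k H hwb]
        _ = ((1 : H) ⊗ₜ[k] (y * z)) * Coalgebra.comul (R := k) (1 : H) := by
            rw [← mul_assoc, Algebra.TensorProduct.tmul_mul_tmul, one_mul]
    exact ⟨y * z, εs_of_comul k H _ key⟩
  · rintro _ _ ⟨a, rfl⟩ ⟨b, rfl⟩
    have e := hwb.comul_one.symm.trans hwb.comul_one'
    have h := congrArg (Tm k H b) (congrArg (Pm k H a) e)
    rw [Pm_mul_right, Pm_mul_left, Tm_mul_one_tmul, Tm_one_tmul_mul, ← εs_eq, ← εt_eq] at h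
    exact h.symm

end WeakBialgebraStmt
end

section
/- Let H be a weak bialgebra and M, N right H-comodules. Define M⊗̄N = {m⊗n ∈ M⊗N : m⊗n = ε(m_{[1]}n_{[1]}) m_{[0]}⊗n_{[0]}}. Then the map ρ(m⊗̄n) = m_{[0]}⊗̄n_{[0]}⊗m_{[1]}n_{[1]} is a well-defined coassociative counital right H-coaction on M⊗̄N. -/
open TensorProduct LinearMap

namespace WeakBialgebraStmt

variable (k : Type*) [Field k] (H : Type*) [Ring H] [Algebra k H] [Coalgebra k H]

variable {k H} in
/-- A (coassociative, counital) right `H`-comodule structure on `M`. -/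
structure IsComodule {M : Type*} [AddCommGroup M] [Module k M]
    (ρ : M →ₗ[k] M ⊗[k] H) : Prop where
  coassoc : ∀ m : M, rTensor H ρ (ρ m)
    = (TensorProduct.assoc k M H H).symm (lTensor M (Coalgebra.comul (R := k)) (ρ m))
  counital : ∀ m : M, (TensorProduct.rid k M) (lTensor M (Coalgebra.counit (R := k)) (ρ m)) = m

variable {k H} in
/-- The canonical (coassociative, but in general not counital) right `H`-coaction on
`M ⊗ N`, `m ⊗ n ↦ m₍₀₎ ⊗ n₍₀₎ ⊗ m₍₁₎n₍₁₎`. -/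
noncomputable def coactT {M N : Type*} [AddCommGroup M] [Module k M]
    [AddCommGroup N] [Module k N]
    (ρM : M →ₗ[k] M ⊗[k] H) (ρN : N →ₗ[k] N ⊗[k] H) :
    (M ⊗[k] N) →ₗ[k] (M ⊗[k] N) ⊗[k] H :=
  lTensor (M ⊗[k] N) (LinearMap.mul' k H) ∘ₗ
    (TensorProduct.tensorTensorTensorComm k M H N H).toLinearMap ∘ₗ
      TensorProduct.map ρM ρN

variable {k H} in
/-- The projection `E : M ⊗ N → M ⊗ N`, `m ⊗ n ↦ ε(m₍₁₎n₍₁₎) m₍₀₎ ⊗ n₍₀₎`, whose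
fixed-point space is the monoidal product `M ⊗̄ N` of `M` and `N` in `𝓜^H`. -/
noncomputable def Ebar {M N : Type*} [AddCommGroup M] [Module k M]
    [AddCommGroup N] [Module k N]
    (ρM : M →ₗ[k] M ⊗[k] H) (ρN : N →ₗ[k] N ⊗[k] H) :
    (M ⊗[k] N) →ₗ[k] (M ⊗[k] N) :=
  (TensorProduct.rid k (M ⊗[k] N)).toLinearMap ∘ₗ
    lTensor (M ⊗[k] N) (Coalgebra.counit (R := k)) ∘ₗ coactT ρM ρN

section Aux

variable {k H}
variable {M N : Type*} [AddCommGroup M] [Module k M] [AddCommGroup N] [Module k N]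

/-- `Φ : (M⊗H)⊗(N⊗H) → (M⊗N)⊗H`, `(m⊗a)⊗(n⊗b) ↦ (m⊗n)⊗(ab)`. -/
noncomputable def Phi : (M ⊗[k] H) ⊗[k] (N ⊗[k] H) →ₗ[k] (M ⊗[k] N) ⊗[k] H :=
  lTensor (M ⊗[k] N) (LinearMap.mul' k H) ∘ₗ
    (TensorProduct.tensorTensorTensorComm k M H N H).toLinearMap

/-- `Θ`, `((m⊗a')⊗a)⊗((n⊗b')⊗b) ↦ ((m⊗n)⊗(a'b'))⊗(ab)`. -/
noncomputable def Theta :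
    ((M ⊗[k] H) ⊗[k] H) ⊗[k] ((N ⊗[k] H) ⊗[k] H) →ₗ[k] ((M ⊗[k] N) ⊗[k] H) ⊗[k] H :=
  TensorProduct.map (Phi (k := k)) (LinearMap.mul' k H) ∘ₗ
    (TensorProduct.tensorTensorTensorComm k (M ⊗[k] H) H (N ⊗[k] H) H).toLinearMap

/-- `E' : (M⊗H)⊗(N⊗H) → M⊗N`, `(m⊗a)⊗(n⊗b) ↦ ε(ab) m⊗n`. -/
noncomputable def Eaux : (M ⊗[k] H) ⊗[k] (N ⊗[k] H) →ₗ[k] M ⊗[k] N :=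
  (TensorProduct.rid k (M ⊗[k] N)).toLinearMap ∘ₗ
    lTensor (M ⊗[k] N) (Coalgebra.counit (R := k)) ∘ₗ Phi (k := k)

/-- `Θ'`, `((m⊗a')⊗a)⊗((n⊗b')⊗b) ↦ ε(a'b') (m⊗n)⊗(ab)`. -/
noncomputable def Theta' :
    ((M ⊗[k] H) ⊗[k] H) ⊗[k] ((N ⊗[k] H) ⊗[k] H) →ₗ[k] (M ⊗[k] N) ⊗[k] H :=
  TensorProduct.map (Eaux (k := k)) (LinearMap.mul' k H) ∘ₗ
    (TensorProduct.tensorTensorTensorComm k (M ⊗[k] H) H (N ⊗[k] H) H).toLinearMap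

/-- `Ψ = α⁻¹ ∘ (id ⊗ Δ) : M⊗H → (M⊗H)⊗H`. -/
noncomputable def Psi : M ⊗[k] H →ₗ[k] (M ⊗[k] H) ⊗[k] H :=
  (TensorProduct.assoc k M H H).symm.toLinearMap ∘ₗ lTensor M (Coalgebra.comul (R := k))

variable (ρM : M →ₗ[k] M ⊗[k] H) (ρN : N →ₗ[k] N ⊗[k] H)

lemma coactT_eq : coactT ρM ρN = Phi (k := k) ∘ₗ TensorProduct.map ρM ρN := rfl

lemma Ebar_eq : Ebar ρM ρN = Eaux (k := k) ∘ₗ TensorProduct.map ρM ρN := rfl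

lemma L1 : rTensor H (coactT ρM ρN) ∘ₗ Phi (k := k)
    = Theta (k := k) ∘ₗ TensorProduct.map (rTensor H ρM) (rTensor H ρN) := by
  ext m a n b
  simp [Phi, Theta, coactT]

lemma L1' : rTensor H (Ebar ρM ρN) ∘ₗ Phi (k := k)
    = Theta' (k := k) ∘ₗ TensorProduct.map (rTensor H ρM) (rTensor H ρN) := by
  ext m a n b
  simp [Phi, Theta', Ebar, Eaux, coactT]

lemma ThetaAux (m : M) (n : N) (P Q : H ⊗[k] H) :
    (TensorProduct.assoc k (M ⊗[k] N) H H).symm ((m ⊗ₜ[k] n) ⊗ₜ[k] (P * Q))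
      = Theta (k := k) (((TensorProduct.assoc k M H H).symm (m ⊗ₜ[k] P))
          ⊗ₜ[k] ((TensorProduct.assoc k N H H).symm (n ⊗ₜ[k] Q))) := by
  induction P using TensorProduct.induction_on with
  | zero => simp
  | tmul a1 a2 =>
    induction Q using TensorProduct.induction_on with
    | zero => simp
    | tmul b1 b2 =>
      simp [Theta, Phi, Algebra.TensorProduct.tmul_mul_tmul]
    | add Q1 Q2 h1 h2 => simp only [mul_add, tmul_add, add_tmul, map_add, h1, h2]
  | add P1 P2 h1 h2 => simp only [add_mul, tmul_add, add_tmul, map_add, h1, h2]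

lemma Theta'Aux (m : M) (n : N) (P Q : H ⊗[k] H) :
    Theta' (k := k) (((TensorProduct.assoc k M H H).symm (m ⊗ₜ[k] P))
          ⊗ₜ[k] ((TensorProduct.assoc k N H H).symm (n ⊗ₜ[k] Q)))
      = (m ⊗ₜ[k] n) ⊗ₜ[k]
          ((TensorProduct.lid k H) (rTensor H (Coalgebra.counit (R := k)) (P * Q))) := by
  induction P using TensorProduct.induction_on with
  | zero => simp
  | tmul a1 a2 =>
    induction Q using TensorProduct.induction_on with
    | zero => simp
    | tmul b1 b2 =>
      simp [Theta', Phi, Eaux, Algebra.TensorProduct.tmul_mul_tmul, smul_tmul', tmul_smul]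
    | add Q1 Q2 h1 h2 => simp only [mul_add, tmul_add, add_tmul, map_add, h1, h2]
  | add P1 P2 h1 h2 => simp only [add_mul, tmul_add, add_tmul, map_add, h1, h2]

lemma L2 (hwb : IsWeakBialgebra k H) :
    (TensorProduct.assoc k (M ⊗[k] N) H H).symm.toLinearMap ∘ₗ
        lTensor (M ⊗[k] N) (Coalgebra.comul (R := k)) ∘ₗ Phi (k := k)
      = Theta (k := k) ∘ₗ TensorProduct.map (Psi (H := H) (M := M)) (Psi (H := H) (M := N)) := by
  ext m a n b
  have := ThetaAux (k := k) m n (Coalgebra.comul (R := k) a) (Coalgebra.comul (R := k) b)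
  simpa [Phi, Psi, hwb.comul_mul] using this

lemma L2' (hwb : IsWeakBialgebra k H) :
    Theta' (k := k) ∘ₗ TensorProduct.map (Psi (H := H) (M := M)) (Psi (H := H) (M := N)) = Phi (k := k) := by
  ext m a n b
  have := Theta'Aux (k := k) m n (Coalgebra.comul (R := k) a) (Coalgebra.comul (R := k) b)
  simp only [← hwb.comul_mul, Coalgebra.rTensor_counit_comul] at this
  simpa [Phi, Psi] using this

lemma comod_coassoc_map {M : Type*} [AddCommGroup M] [Module k M]
    {ρ : M →ₗ[k] M ⊗[k] H} (h : IsComodule ρ) :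
    rTensor H ρ ∘ₗ ρ = Psi (H := H) (M := M) ∘ₗ ρ :=
  LinearMap.ext fun m => h.coassoc m

end Aux

/-- For right `H`-comodules `M` and `N` over a weak bialgebra `H`, the map
`m ⊗̄ n ↦ m₍₀₎ ⊗̄ n₍₀₎ ⊗ m₍₁₎n₍₁₎` is a well-defined, coassociative, counital right
`H`-coaction on `M ⊗̄ N = {x ∈ M ⊗ N : E x = x}`. -/
theorem coaction_on_tbar {M N : Type*} [AddCommGroup M] [Module k M]
    [AddCommGroup N] [Module k N]
    (ρM : M →ₗ[k] M ⊗[k] H) (ρN : N →ₗ[k] N ⊗[k] H)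
    (hwb : IsWeakBialgebra k H) (hM : IsComodule ρM) (hN : IsComodule ρN) :
    -- well-definedness: the coaction maps `M ⊗̄ N` into `(M ⊗̄ N) ⊗ H`
    (∀ x : M ⊗[k] N, Ebar ρM ρN x = x →
      rTensor H (Ebar ρM ρN) (coactT ρM ρN x) = coactT ρM ρN x) ∧
    -- coassociativity on `M ⊗̄ N`
    (∀ x : M ⊗[k] N, Ebar ρM ρN x = x →
      rTensor H (coactT ρM ρN) (coactT ρM ρN x)
        = (TensorProduct.assoc k (M ⊗[k] N) H H).symm
            (lTensor (M ⊗[k] N) (Coalgebra.comul (R := k)) (coactT ρM ρN x))) ∧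
    -- counitality on `M ⊗̄ N`
    (∀ x : M ⊗[k] N, Ebar ρM ρN x = x →
      (TensorProduct.rid k (M ⊗[k] N))
        (lTensor (M ⊗[k] N) (Coalgebra.counit (R := k)) (coactT ρM ρN x)) = x) := by
  have key1 : rTensor H (Ebar ρM ρN) ∘ₗ coactT ρM ρN = coactT ρM ρN := by
    calc rTensor H (Ebar ρM ρN) ∘ₗ coactT ρM ρN
        = (rTensor H (Ebar ρM ρN) ∘ₗ Phi (k := k)) ∘ₗ TensorProduct.map ρM ρN := by
          rw [coactT_eq]; rfl
      _ = Theta' (k := k) ∘ₗ TensorProduct.map (rTensor H ρM ∘ₗ ρM) (rTensor H ρN ∘ₗ ρN) := by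
          rw [L1', TensorProduct.map_comp]; rfl
      _ = Theta' (k := k) ∘ₗ TensorProduct.map (Psi (H := H) (M := M) ∘ₗ ρM) (Psi (H := H) (M := N) ∘ₗ ρN) := by
          rw [comod_coassoc_map hM, comod_coassoc_map hN]
      _ = (Theta' (k := k) ∘ₗ TensorProduct.map (Psi (H := H) (M := M)) (Psi (H := H) (M := N)))
            ∘ₗ TensorProduct.map ρM ρN := by
          rw [TensorProduct.map_comp]; rfl
      _ = coactT ρM ρN := by rw [L2' hwb, coactT_eq]
  have key2 : rTensor H (coactT ρM ρN) ∘ₗ coactT ρM ρN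
      = ((TensorProduct.assoc k (M ⊗[k] N) H H).symm.toLinearMap ∘ₗ
          lTensor (M ⊗[k] N) (Coalgebra.comul (R := k))) ∘ₗ coactT ρM ρN := by
    calc rTensor H (coactT ρM ρN) ∘ₗ coactT ρM ρN
        = (rTensor H (coactT ρM ρN) ∘ₗ Phi (k := k)) ∘ₗ TensorProduct.map ρM ρN := by
          rw [coactT_eq]; rfl
      _ = Theta (k := k) ∘ₗ TensorProduct.map (rTensor H ρM ∘ₗ ρM) (rTensor H ρN ∘ₗ ρN) := by
          rw [L1, TensorProduct.map_comp]; rfl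
      _ = Theta (k := k) ∘ₗ TensorProduct.map (Psi (H := H) (M := M) ∘ₗ ρM) (Psi (H := H) (M := N) ∘ₗ ρN) := by
          rw [comod_coassoc_map hM, comod_coassoc_map hN]
      _ = (Theta (k := k) ∘ₗ TensorProduct.map (Psi (H := H) (M := M)) (Psi (H := H) (M := N)))
            ∘ₗ TensorProduct.map ρM ρN := by
          rw [TensorProduct.map_comp]; rfl
      _ = _ := by rw [← L2 hwb, coactT_eq]; rfl
  refine ⟨fun x _ => ?_, fun x _ => ?_, fun x hx => hx⟩
  · exact LinearMap.congr_fun key1 x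
  · exact LinearMap.congr_fun key2 x

end WeakBialgebraStmt
end
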